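/- Let (G, A, P) be an Ising model with pairwise potential f with temperature parameter r^{-1}. Then P satisfies assumption H1: there exists κ_min > 0 (depending only on r) such that for every finite subset V of G, κ_min · ‖P_{i|G} - P_{i|V}‖_∞ ≤ ‖P_{i|G}‖_∞ - ‖P_{i|V}‖_∞. -/

import Mathlib

open MeasureTheory

/-- `g_{i,j}(a,b) = f_{i,j}(a,b) - f_{i,j}(-a,b)`. -/
noncomputable def gpot {G : Type*} (f : G → G → Bool → Bool → ℝ) (i j : G) (a b : Bool) : ℝ :=
  f i j a b - f i j (!a) b

/-- One-point specification of the Ising model: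
`spec f i a y = (1 + exp(-∑_j g_{i,j}(a, y(j))))⁻¹`. -/
noncomputable def spec {G : Type*} (f : G → G → Bool → Bool → ℝ) (i : G) (a : Bool)
    (y : G → Bool) : ℝ :=
  1 / (1 + Real.exp (-(∑' j, gpot f i j a (y j))))

/-- `P` is an Ising model with potential `f` (DLR equations). -/
def IsIsing {G : Type*} [MeasurableSpace (G → Bool)] (f : G → G → Bool → Bool → ℝ)
    (P : Measure (G → Bool)) : Prop :=
  ∀ (i : G) (B : Set (G → Bool)), MeasurableSet B →
    (∀ y z : G → Bool, (∀ j, j ≠ i → y j = z j) → (y ∈ B ↔ z ∈ B)) →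
    ∀ a : Bool, P (B ∩ {y | y i = a}) = ENNReal.ofReal (∫ y in B, spec f i a y ∂P)

/-- `ω_{i,j}(f) = sup_{a,b} (g_{i,j}(a,b) - g_{i,j}(a,-b))`. -/
noncomputable def omegaf {G : Type*} (f : G → G → Bool → Bool → ℝ) (i j : G) : ℝ :=
  ⨆ a : Bool, ⨆ b : Bool, (gpot f i j a b - gpot f i j a (!b))

/-- Conditional probability `P_{i|V}(x) = P(x(i) | x(V \ {i}))`, with the convention
that it equals `1/2` when the conditioning cylinder has probability `0`. -/
noncomputable def condProb {G : Type*} [DecidableEq G] (P : Measure (G → Bool)) (i : G)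
    (V : Finset G) (x : G → Bool) : ℝ :=
  if P {y | ∀ j ∈ V.erase i, y j = x j} = 0 then 1/2
  else (P {y | y i = x i ∧ ∀ j ∈ V.erase i, y j = x j}).toReal /
    (P {y | ∀ j ∈ V.erase i, y j = x j}).toReal

/-!
Write `h_i(a, y) = ∑_j g_{i,j}(a, y_j)` for the local field, so that `P_{i|G}(x) = σ(h_i(x_i, x))`
with `σ` the logistic function, and `|h_i| ≤ 2r`. By the DLR equation at `i`, `P_{i|V}(x)` is the
average of `σ(h_i(x_i, ·))` under `P` conditioned on the cylinder `C` of configurations agreeing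
with `x` on `V \ {i}`. On `C` the field ranges over an interval of length
`S = ∑_{j ∉ V \ {i}} ω_{i,j}(f)` whose endpoints are attained in `C` (the spin at `i` does not
enter the field, as `f_{i,i} = 0`). Since `σ` is 1-Lipschitz, `‖P_{i|G} - P_{i|V}‖_∞ ≤ S`.
Conversely, the DLR equations at the sites `j ∉ V \ {i}` give `P(y_j = b | C) ≥ σ(-2r)`, so on
average the field falls short of its maximum on `C` by at least `σ(-2r) S`; as `σ' ≥ σ(-2r)²` on
`[-2r, 2r]`, every `P_{i|V}(x)` is at most `sup P_{i|G} - σ(-2r)³ S`. Hence `κ = σ(-2r)³` works.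
-/

section

open ProbabilityTheory Real

namespace Real

lemma sigmoid_sub_le_sub {u v : ℝ} (h : u ≤ v) : sigmoid v - sigmoid u ≤ v - u := by
  have hderiv : ∀ t, deriv sigmoid t ≤ 1 := fun t => by
    rw [deriv_sigmoid]
    nlinarith [sigmoid_pos t, sigmoid_lt_one t]
  simpa using image_sub_le_mul_sub_of_deriv_le differentiable_sigmoid hderiv h

lemma sigmoid_neg_sq_mul_sub_le {B u v : ℝ} (hu : -B ≤ u) (huv : u ≤ v) (hv : v ≤ B) :
    sigmoid (-B) ^ 2 * (v - u) ≤ sigmoid v - sigmoid u := by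
  refine (convex_Icc (-B) B).mul_sub_le_image_sub_of_le_deriv continuous_sigmoid.continuousOn
    differentiable_sigmoid.differentiableOn (fun c hc => ?_) u ⟨hu, huv.trans hv⟩ v
    ⟨hu.trans huv, hv⟩ huv
  rw [interior_Icc] at hc
  -- `σ' c = σ c * σ (-c)`, and both factors are at least `σ (-B)` on `[-B, B]`
  simp only [deriv_sigmoid, ← sigmoid_neg, sq]
  exact mul_le_mul (sigmoid_le hc.1.le) (sigmoid_le (by linarith [hc.2]))
    (sigmoid_nonneg _) (sigmoid_nonneg _)

end Real

lemma ciSup_bool_eq {α : Type*} [ConditionallyCompleteLattice α] (f : Bool → α) :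
    ⨆ b, f b = f true ⊔ f false :=
  le_antisymm (ciSup_le fun b => by cases b <;> simp)
    (sup_le (le_ciSup (Finite.bddAbove_range f) _) (le_ciSup (Finite.bddAbove_range f) _))

variable {G : Type*}

section Potential

variable (f : G → G → Bool → Bool → ℝ) (i j : G)

lemma gpot_false (b : Bool) : gpot f i j false b = -gpot f i j true b := by
  simp only [gpot, Bool.not_false, Bool.not_true]
  ring

lemma omegaf_eq_abs : omegaf f i j = |gpot f i j true true - gpot f i j true false| := by
  simp only [omegaf, ciSup_bool_eq, Bool.not_true, Bool.not_false, gpot_false, neg_sub_neg]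
  rw [sup_comm (gpot f i j true false - _), sup_idem, abs_eq_max_neg, neg_sub]

lemma omegaf_nonneg : 0 ≤ omegaf f i j := by
  rw [omegaf_eq_abs]
  exact abs_nonneg _

noncomputable def argmaxSpin (a : Bool) : Bool := decide (gpot f i j a false ≤ gpot f i j a true)

lemma gpot_argmaxSpin (a : Bool) :
    gpot f i j a (argmaxSpin f i j a) = max (gpot f i j a true) (gpot f i j a false) := by
  by_cases h : gpot f i j a false ≤ gpot f i j a true
  · simp [argmaxSpin, h]
  · simp [argmaxSpin, h, (not_le.mp h).le]

lemma gpot_not_argmaxSpin (a : Bool) :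
    gpot f i j a (!argmaxSpin f i j a) = min (gpot f i j a true) (gpot f i j a false) := by
  by_cases h : gpot f i j a false ≤ gpot f i j a true
  · simp [argmaxSpin, h]
  · simp [argmaxSpin, h, (not_le.mp h).le]

lemma gpot_le_gpot_argmaxSpin (a b : Bool) :
    gpot f i j a b ≤ gpot f i j a (argmaxSpin f i j a) := by
  rw [gpot_argmaxSpin]
  cases b
  · exact le_max_right _ _
  · exact le_max_left _ _

lemma gpot_not_argmaxSpin_le (a b : Bool) :
    gpot f i j a (!argmaxSpin f i j a) ≤ gpot f i j a b := by
  rw [gpot_not_argmaxSpin]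
  cases b
  · exact min_le_right _ _
  · exact min_le_left _ _

lemma gpot_argmaxSpin_sub_gpot_not (a : Bool) :
    gpot f i j a (argmaxSpin f i j a) - gpot f i j a (!argmaxSpin f i j a) = omegaf f i j := by
  rw [gpot_argmaxSpin, gpot_not_argmaxSpin, max_sub_min_eq_abs, omegaf_eq_abs]
  cases a
  · rw [gpot_false, gpot_false, neg_sub_neg, abs_sub_comm]
  · exact abs_sub_comm _ _

noncomputable def gpotBound : ℝ :=
  max |f i j true true| |f i j true false| + max |f i j false true| |f i j false false|

lemma abs_gpot_le_gpotBound (a b : Bool) : |gpot f i j a b| ≤ gpotBound f i j := by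
  have hmax : ∀ c, |f i j c b| ≤ max |f i j c true| |f i j c false| := fun c => by
    cases b
    · exact le_max_right _ _
    · exact le_max_left _ _
  have htri := abs_sub (f i j a b) (f i j (!a) b)
  unfold gpot gpotBound
  cases a <;> simp only [Bool.not_true, Bool.not_false] at htri ⊢ <;>
    linarith [hmax true, hmax false]

lemma summable_gpotBound (hsum : ∀ a, Summable fun j => max |f i j a true| |f i j a false|) :
    Summable (gpotBound f i) :=
  (hsum true).add (hsum false)

lemma tsum_gpotBound_le (hsum : ∀ a, Summable fun j => max |f i j a true| |f i j a false|)
    {r : ℝ} (hrange : ∀ a, ∑' j, max |f i j a true| |f i j a false| ≤ r) :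
    ∑' j, gpotBound f i j ≤ 2 * r := by
  have hadd := (hsum true).tsum_add (hsum false)
  unfold gpotBound
  linarith [hrange true, hrange false]

end Potential

noncomputable def localField (f : G → G → Bool → Bool → ℝ) (i : G) (a : Bool) (y : G → Bool) : ℝ :=
  ∑' j, gpot f i j a (y j)

section LocalField

variable {f : G → G → Bool → Bool → ℝ} {i : G}

lemma spec_eq_sigmoid (a : Bool) (y : G → Bool) : spec f i a y = sigmoid (localField f i a y) := by
  rw [spec, sigmoid_def, one_div, localField]

lemma spec_nonneg (a : Bool) (y : G → Bool) : 0 ≤ spec f i a y :=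
  spec_eq_sigmoid a y ▸ sigmoid_nonneg _

lemma spec_le_one (a : Bool) (y : G → Bool) : spec f i a y ≤ 1 :=
  spec_eq_sigmoid a y ▸ sigmoid_le_one _

lemma summable_gpot (hs : Summable (gpotBound f i)) (a : Bool) (y : G → Bool) :
    Summable fun j => gpot f i j a (y j) :=
  hs.of_norm_bounded fun j => abs_gpot_le_gpotBound f i j a (y j)

lemma abs_localField_le (hs : Summable (gpotBound f i)) {R : ℝ} (hR : ∑' j, gpotBound f i j ≤ R)
    (a : Bool) (y : G → Bool) : |localField f i a y| ≤ R :=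
  (tsum_of_norm_bounded (f := fun j => gpot f i j a (y j)) hs.hasSum
    fun j => abs_gpot_le_gpotBound f i j a (y j)).trans hR

lemma sigmoid_neg_le_spec (hs : Summable (gpotBound f i)) {R : ℝ} (hR : ∑' j, gpotBound f i j ≤ R)
    (a : Bool) (y : G → Bool) : sigmoid (-R) ≤ spec f i a y := by
  rw [spec_eq_sigmoid]
  exact sigmoid_le (neg_le_of_abs_le (abs_localField_le hs hR a y))

lemma continuous_localField (hs : Summable (gpotBound f i)) (a : Bool) :
    Continuous (localField f i a) :=
  continuous_tsum
    (fun j => (continuous_of_discreteTopology (f := gpot f i j a)).comp (continuous_apply j)) hs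
    fun j y => abs_gpot_le_gpotBound f i j a (y j)

lemma integrable_spec [Countable G] {μ : Measure (G → Bool)} [IsFiniteMeasure μ]
    (hs : Summable (gpotBound f i)) (a : Bool) : Integrable (spec f i a) μ := by
  have hcont : Continuous (spec f i a) := by
    rw [show spec f i a = sigmoid ∘ localField f i a from funext (spec_eq_sigmoid a)]
    exact continuous_sigmoid.comp (continuous_localField hs a)
  refine Integrable.of_bound hcont.measurable.aestronglyMeasurable 1 (ae_of_all _ fun y => ?_)
  rw [norm_of_nonneg (spec_nonneg a y)]
  exact spec_le_one a y

lemma localField_update_self [DecidableEq G] (hdiag : ∀ a b, f i i a b = 0) (a b : Bool)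
    (y : G → Bool) :
    localField f i a (Function.update y i b) = localField f i a y := by
  refine tsum_congr fun j => ?_
  rcases eq_or_ne j i with rfl | hj
  · simp [gpot, hdiag]
  · rw [Function.update_of_ne hj]

lemma sigmoid_localField_le_iSup_spec [DecidableEq G] (hdiag : ∀ a b, f i i a b = 0) (a : Bool)
    (y : G → Bool) : sigmoid (localField f i a y) ≤ ⨆ z : G → Bool, spec f i (z i) z := by
  have hbdd : BddAbove (Set.range fun z : G → Bool => spec f i (z i) z) :=
    ⟨1, Set.forall_mem_range.2 fun z => spec_le_one (z i) z⟩
  have hz := le_ciSup hbdd (Function.update y i a)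
  rwa [Function.update_self, spec_eq_sigmoid, localField_update_self hdiag] at hz

end LocalField

def cylinderSet {β : Type*} (W : Finset G) (x : G → β) : Set (G → β) :=
  {y | ∀ j ∈ W, y j = x j}

section Cylinder

variable {β : Type*} (W : Finset G) (x : G → β)

lemma measurableSet_cylinderSet [MeasurableSpace β] [MeasurableSingletonClass β] :
    MeasurableSet (cylinderSet W x) := by
  have hinter : cylinderSet W x = ⋂ j ∈ W, (fun y : G → β => y j) ⁻¹' {x j} := by
    ext y
    simp [cylinderSet]
  rw [hinter]
  exact Finset.measurableSet_biInter W fun j _ => measurable_pi_apply j (measurableSet_singleton _)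

lemma cylinderSet_insert [DecidableEq G] (j : G) :
    cylinderSet (insert j W) x = cylinderSet W x ∩ {y | y j = x j} := by
  ext y
  simp only [cylinderSet, Finset.forall_mem_insert, Set.mem_ofPred_eq, Set.mem_inter_iff]
  exact and_comm

lemma self_mem_cylinderSet : x ∈ cylinderSet W x := fun _ _ => rfl

lemma mem_cylinderSet_congr {j : G} (hj : j ∉ W) {y z : G → β} (hyz : ∀ k, k ≠ j → y k = z k) :
    y ∈ cylinderSet W x ↔ z ∈ cylinderSet W x := by
  have hW : ∀ k ∈ W, y k = z k := fun k hk => hyz k (ne_of_mem_of_not_mem hk hj)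
  exact forall₂_congr fun k hk => by rw [hW k hk]

end Cylinder

section ExtremalConfig

variable [DecidableEq G] (f : G → G → Bool → Bool → ℝ) (i : G) (a : Bool) (W : Finset G)
  (x : G → Bool)

noncomputable def maxConfig : G → Bool := fun j => if j ∈ W then x j else argmaxSpin f i j a

noncomputable def minConfig : G → Bool := fun j => if j ∈ W then x j else !argmaxSpin f i j a

noncomputable def omegaOutside (j : G) : ℝ := if j ∈ W then 0 else omegaf f i j

variable {f i a W x}

lemma gpot_le_gpot_maxConfig {y : G → Bool} (hy : y ∈ cylinderSet W x) (j : G) :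
    gpot f i j a (y j) ≤ gpot f i j a (maxConfig f i a W x j) := by
  by_cases hj : j ∈ W
  · simp [maxConfig, hj, hy j hj]
  · simpa [maxConfig, hj] using gpot_le_gpot_argmaxSpin f i j a (y j)

lemma gpot_minConfig_le {y : G → Bool} (hy : y ∈ cylinderSet W x) (j : G) :
    gpot f i j a (minConfig f i a W x j) ≤ gpot f i j a (y j) := by
  by_cases hj : j ∈ W
  · simp [minConfig, hj, hy j hj]
  · simpa [minConfig, hj] using gpot_not_argmaxSpin_le f i j a (y j)

lemma localField_le_maxConfig (hs : Summable (gpotBound f i)) {y : G → Bool}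
    (hy : y ∈ cylinderSet W x) : localField f i a y ≤ localField f i a (maxConfig f i a W x) :=
  (summable_gpot hs a y).tsum_le_tsum (gpot_le_gpot_maxConfig hy) (summable_gpot hs a _)

lemma localField_minConfig_le (hs : Summable (gpotBound f i)) {y : G → Bool}
    (hy : y ∈ cylinderSet W x) : localField f i a (minConfig f i a W x) ≤ localField f i a y :=
  (summable_gpot hs a _).tsum_le_tsum (gpot_minConfig_le hy) (summable_gpot hs a y)

lemma hasSum_omegaOutside (hs : Summable (gpotBound f i)) :
    HasSum (omegaOutside f i W)
      (localField f i a (maxConfig f i a W x) - localField f i a (minConfig f i a W x)) := by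
  have hterm : ∀ j, gpot f i j a (maxConfig f i a W x j) - gpot f i j a (minConfig f i a W x j) =
      omegaOutside f i W j := fun j => by
    by_cases hj : j ∈ W
    · simp [omegaOutside, maxConfig, minConfig, hj]
    · simp [omegaOutside, maxConfig, minConfig, hj, gpot_argmaxSpin_sub_gpot_not]
  have h := (summable_gpot hs a (maxConfig f i a W x)).hasSum.sub
    (summable_gpot hs a (minConfig f i a W x)).hasSum
  simp only [hterm] at h
  exact h

lemma omegaOutside_nonneg (j : G) : 0 ≤ omegaOutside f i W j := by
  unfold omegaOutside
  split_ifs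
  exacts [le_rfl, omegaf_nonneg f i j]

/-- Each site `j ∉ W` where `y` takes the minimising spin lowers the field by `ω_{i,j}(f)`. -/
lemma sum_omegaOutside_mul_indicator_le (hs : Summable (gpotBound f i)) {y : G → Bool}
    (hy : y ∈ cylinderSet W x) (F : Finset G) :
    ∑ j ∈ F, omegaOutside f i W j * {z : G → Bool | z j = !argmaxSpin f i j a}.indicator 1 y ≤
      localField f i a (maxConfig f i a W x) - localField f i a y := by
  have hterm : ∀ j, omegaOutside f i W j * {z : G → Bool | z j = !argmaxSpin f i j a}.indicator 1 y
      ≤ gpot f i j a (maxConfig f i a W x j) - gpot f i j a (y j) := by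
    intro j
    by_cases hj : j ∈ W
    · simp [omegaOutside, maxConfig, hj, hy j hj]
    by_cases hyj : y j = !argmaxSpin f i j a
    · simp [omegaOutside, maxConfig, hj, hyj, gpot_argmaxSpin_sub_gpot_not]
    · simpa [omegaOutside, maxConfig, hj, hyj] using gpot_le_gpot_argmaxSpin f i j a (y j)
  calc _ ≤ ∑ j ∈ F, (gpot f i j a (maxConfig f i a W x j) - gpot f i j a (y j)) :=
        Finset.sum_le_sum fun j _ => hterm j
    _ ≤ ∑' j, (gpot f i j a (maxConfig f i a W x j) - gpot f i j a (y j)) :=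
        ((summable_gpot hs a _).sub (summable_gpot hs a y)).sum_le_tsum F
          fun j _ => sub_nonneg.2 (gpot_le_gpot_maxConfig hy j)
    _ = _ := (summable_gpot hs a _).tsum_sub (summable_gpot hs a y)

end ExtremalConfig

section SpecOnCylinder

variable [DecidableEq G] {f : G → G → Bool → Bool → ℝ} {i : G} {a : Bool} {W : Finset G}
  {x : G → Bool}

lemma spec_mem_Icc (hs : Summable (gpotBound f i)) {y : G → Bool} (hy : y ∈ cylinderSet W x) :
    spec f i a y ∈ Set.Icc (sigmoid (localField f i a (minConfig f i a W x)))
      (sigmoid (localField f i a (maxConfig f i a W x))) := by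
  rw [spec_eq_sigmoid]
  exact ⟨sigmoid_le (localField_minConfig_le hs hy), sigmoid_le (localField_le_maxConfig hs hy)⟩

lemma integral_spec_mem_Icc [Countable G] {Q : Measure (G → Bool)} [IsProbabilityMeasure Q]
    (hs : Summable (gpotBound f i)) (hQ : ∀ᵐ y ∂Q, y ∈ cylinderSet W x) :
    ∫ y, spec f i a y ∂Q ∈ Set.Icc (sigmoid (localField f i a (minConfig f i a W x)))
      (sigmoid (localField f i a (maxConfig f i a W x))) :=
  (convex_Icc _ _).integral_mem isClosed_Icc (hQ.mono fun _ hy => spec_mem_Icc hs hy)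
    (integrable_spec hs a)

lemma spec_le_sigmoid_maxConfig_sub (hs : Summable (gpotBound f i)) {R : ℝ}
    (hR : ∑' j, gpotBound f i j ≤ R) {y : G → Bool} (hy : y ∈ cylinderSet W x) (F : Finset G) :
    spec f i a y ≤ sigmoid (localField f i a (maxConfig f i a W x)) - sigmoid (-R) ^ 2 *
      ∑ j ∈ F, omegaOutside f i W j * {z : G → Bool | z j = !argmaxSpin f i j a}.indicator 1 y := by
  have hslope := sigmoid_neg_sq_mul_sub_le (neg_le_of_abs_le (abs_localField_le hs hR a y))
    (localField_le_maxConfig hs hy) (le_of_abs_le (abs_localField_le hs hR a _))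
  have hgap := mul_le_mul_of_nonneg_left (sum_omegaOutside_mul_indicator_le (a := a) hs hy F)
    (sq_nonneg (sigmoid (-R)))
  rw [spec_eq_sigmoid]
  linarith

lemma integral_spec_le_sigmoid_maxConfig_sub [Countable G] {Q : Measure (G → Bool)}
    [IsProbabilityMeasure Q] (hs : Summable (gpotBound f i)) {R : ℝ}
    (hR : ∑' j, gpotBound f i j ≤ R) (hQ : ∀ᵐ y ∂Q, y ∈ cylinderSet W x) {ε : ℝ}
    (hε : ∀ j ∉ W, ∀ b, ε ≤ Q.real {y | y j = b}) (F : Finset G) :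
    ∫ y, spec f i a y ∂Q ≤ sigmoid (localField f i a (maxConfig f i a W x)) -
      sigmoid (-R) ^ 2 * ε * ∑ j ∈ F, omegaOutside f i W j := by
  set A : G → Set (G → Bool) := fun j => {z | z j = !argmaxSpin f i j a}
  have hA : ∀ j, MeasurableSet (A j) := fun j => measurable_pi_apply j (measurableSet_singleton _)
  have hind : ∀ j, Integrable ((A j).indicator (1 : (G → Bool) → ℝ)) Q :=
    fun j => (integrable_const 1).indicator (hA j)
  have hweighted :
      Integrable (fun y => ∑ j ∈ F, omegaOutside f i W j * (A j).indicator 1 y) Q :=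
    integrable_finsetSum F fun j _ => (hind j).const_mul _
  have hε' : ε * ∑ j ∈ F, omegaOutside f i W j ≤ ∑ j ∈ F, omegaOutside f i W j * Q.real (A j) := by
    rw [Finset.mul_sum]
    refine Finset.sum_le_sum fun j _ => ?_
    by_cases hj : j ∈ W
    · simp [omegaOutside, hj]
    · rw [mul_comm]
      exact mul_le_mul_of_nonneg_left (hε j hj _) (omegaOutside_nonneg j)
  calc ∫ y, spec f i a y ∂Q
      ≤ ∫ y, (sigmoid (localField f i a (maxConfig f i a W x)) -
          sigmoid (-R) ^ 2 * ∑ j ∈ F, omegaOutside f i W j * (A j).indicator 1 y) ∂Q :=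
        integral_mono_ae (integrable_spec hs a) ((integrable_const _).sub (hweighted.const_mul _))
          (hQ.mono fun _ hy => spec_le_sigmoid_maxConfig_sub hs hR hy F)
    _ = sigmoid (localField f i a (maxConfig f i a W x)) -
          sigmoid (-R) ^ 2 * ∑ j ∈ F, omegaOutside f i W j * Q.real (A j) := by
        rw [integral_sub (integrable_const _) (hweighted.const_mul _), integral_const,
          integral_const_mul, integral_finsetSum F fun j _ => (hind j).const_mul _]
        simp [integral_const_mul, integral_indicator_one (hA _)]
    _ ≤ _ := by linarith [mul_le_mul_of_nonneg_left hε' (sq_nonneg (sigmoid (-R)))]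

end SpecOnCylinder

namespace IsIsing

variable [Countable G] {f : G → G → Bool → Bool → ℝ} {P : Measure (G → Bool)}

lemma mul_measureReal_le_measureReal_inter (hP : IsIsing f P) [IsFiniteMeasure P] {j : G}
    (hs : Summable (gpotBound f j)) {b : Bool} {c : ℝ} (hc : ∀ y, c ≤ spec f j b y)
    {B : Set (G → Bool)} (hB : MeasurableSet B)
    (hBj : ∀ y z : G → Bool, (∀ k, k ≠ j → y k = z k) → (y ∈ B ↔ z ∈ B)) :
    c * P.real B ≤ P.real (B ∩ {y | y j = b}) := by
  rw [measureReal_def P (B ∩ _), hP j B hB hBj b,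
    ENNReal.toReal_ofReal (setIntegral_nonneg hB fun y _ => spec_nonneg b y)]
  exact setIntegral_ge_of_const_le_real hB (measure_ne_top P B) (fun y _ => hc y)
    (integrable_spec hs b).integrableOn

variable [DecidableEq G]

lemma measureReal_cylinderSet_pos (hP : IsIsing f P) [IsProbabilityMeasure P]
    (hs : ∀ j, Summable (gpotBound f j)) {R : ℝ} (hR : ∀ j, ∑' k, gpotBound f j k ≤ R)
    (W : Finset G) (x : G → Bool) : 0 < P.real (cylinderSet W x) := by
  induction W using Finset.induction_on with
  | empty => simp [cylinderSet]
  | insert j W hj ih =>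
    rw [cylinderSet_insert]
    exact (mul_pos (sigmoid_pos _) ih).trans_le <| hP.mul_measureReal_le_measureReal_inter (hs j)
      (sigmoid_neg_le_spec (hs j) (hR j) _) (measurableSet_cylinderSet W x)
      fun _ _ => mem_cylinderSet_congr W x hj

lemma measure_cylinderSet_ne_zero (hP : IsIsing f P) [IsProbabilityMeasure P]
    (hs : ∀ j, Summable (gpotBound f j)) {R : ℝ} (hR : ∀ j, ∑' k, gpotBound f j k ≤ R)
    (W : Finset G) (x : G → Bool) : P (cylinderSet W x) ≠ 0 :=
  (measureReal_ne_zero_iff (measure_ne_top P _)).1 (hP.measureReal_cylinderSet_pos hs hR W x).ne'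

lemma isProbabilityMeasure_cond_cylinderSet (hP : IsIsing f P) [IsProbabilityMeasure P]
    (hs : ∀ j, Summable (gpotBound f j)) {R : ℝ} (hR : ∀ j, ∑' k, gpotBound f j k ≤ R)
    (W : Finset G) (x : G → Bool) : IsProbabilityMeasure P[|cylinderSet W x] :=
  cond_isProbabilityMeasure (hP.measure_cylinderSet_ne_zero hs hR W x)

lemma sigmoid_neg_le_cond_cylinderSet (hP : IsIsing f P) [IsProbabilityMeasure P]
    (hs : ∀ j, Summable (gpotBound f j)) {R : ℝ} (hR : ∀ j, ∑' k, gpotBound f j k ≤ R)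
    {W : Finset G} (x : G → Bool) {j : G} (hj : j ∉ W) (b : Bool) :
    sigmoid (-R) ≤ (P[|cylinderSet W x]).real {y | y j = b} := by
  rw [measureReal_def, cond_apply (measurableSet_cylinderSet W x), ENNReal.toReal_mul,
    ENNReal.toReal_inv, ← measureReal_def, ← measureReal_def,
    le_inv_mul_iff₀ (hP.measureReal_cylinderSet_pos hs hR W x), mul_comm]
  exact hP.mul_measureReal_le_measureReal_inter (hs j) (sigmoid_neg_le_spec (hs j) (hR j) b)
    (measurableSet_cylinderSet W x) fun _ _ => mem_cylinderSet_congr W x hj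

lemma condProb_eq_integral_cond (hP : IsIsing f P) [IsProbabilityMeasure P]
    (hs : ∀ j, Summable (gpotBound f j)) {R : ℝ} (hR : ∀ j, ∑' k, gpotBound f j k ≤ R)
    (i : G) (V : Finset G) (x : G → Bool) :
    condProb P i V x = ∫ y, spec f i (x i) y ∂P[|cylinderSet (V.erase i) x] := by
  set C := cylinderSet (V.erase i) x
  have hC : MeasurableSet C := measurableSet_cylinderSet _ x
  have hPC : P C ≠ 0 := hP.measure_cylinderSet_ne_zero hs hR _ x
  have hset : {y : G → Bool | y i = x i ∧ ∀ j ∈ V.erase i, y j = x j} = C ∩ {y | y i = x i} := by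
    ext y
    exact and_comm
  have hDLR := hP i C hC (fun _ _ => mem_cylinderSet_congr _ x (Finset.notMem_erase i V)) (x i)
  rw [condProb, if_neg (show ¬P {y | ∀ j ∈ V.erase i, y j = x j} = 0 from hPC), hset, hDLR,
    ENNReal.toReal_ofReal (setIntegral_nonneg hC fun y _ => spec_nonneg _ y),
    ProbabilityTheory.cond, integral_smul_measure, ENNReal.toReal_inv, smul_eq_mul, div_eq_inv_mul]
  rfl

lemma abs_spec_sub_condProb_le (hP : IsIsing f P) [IsProbabilityMeasure P]
    (hs : ∀ j, Summable (gpotBound f j)) {R : ℝ} (hR : ∀ j, ∑' k, gpotBound f j k ≤ R)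
    (i : G) (V : Finset G) (x : G → Bool) :
    |spec f i (x i) x - condProb P i V x| ≤ ∑' j, omegaOutside f i (V.erase i) j := by
  have := hP.isProbabilityMeasure_cond_cylinderSet hs hR (V.erase i) x
  have hspec := spec_mem_Icc (a := x i) (hs i) (self_mem_cylinderSet (V.erase i) x)
  have hcond := integral_spec_mem_Icc (a := x i) (hs i)
    (ae_cond_mem (μ := P) (measurableSet_cylinderSet (V.erase i) x))
  have hlip := sigmoid_sub_le_sub (sigmoid_le_iff.1 (hspec.1.trans hspec.2))
  rw [hP.condProb_eq_integral_cond hs hR i V x,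
    (hasSum_omegaOutside (a := x i) (x := x) (hs i)).tsum_eq, abs_le]
  constructor <;> linarith [hspec.1, hspec.2, hcond.1, hcond.2]

lemma condProb_le_iSup_spec_sub (hP : IsIsing f P) [IsProbabilityMeasure P] {i : G}
    (hdiag : ∀ a b, f i i a b = 0) (hs : ∀ j, Summable (gpotBound f j)) {R : ℝ}
    (hR : ∀ j, ∑' k, gpotBound f j k ≤ R) (V : Finset G) (x : G → Bool) (F : Finset G) :
    condProb P i V x ≤ (⨆ y : G → Bool, spec f i (y i) y) -
      sigmoid (-R) ^ 3 * ∑ j ∈ F, omegaOutside f i (V.erase i) j := by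
  have := hP.isProbabilityMeasure_cond_cylinderSet hs hR (V.erase i) x
  have hgap := integral_spec_le_sigmoid_maxConfig_sub (a := x i) (hs i) (hR i)
    (ae_cond_mem (μ := P) (measurableSet_cylinderSet (V.erase i) x))
    (fun j hj b => hP.sigmoid_neg_le_cond_cylinderSet hs hR x hj b) F
  have hmax := sigmoid_localField_le_iSup_spec hdiag (x i) (maxConfig f i (x i) (V.erase i) x)
  rw [hP.condProb_eq_integral_cond hs hR i V x, pow_succ]
  linarith

lemma iSup_condProb_le (hP : IsIsing f P) [IsProbabilityMeasure P] {i : G}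
    (hdiag : ∀ a b, f i i a b = 0) (hs : ∀ j, Summable (gpotBound f j)) {R : ℝ}
    (hR : ∀ j, ∑' k, gpotBound f j k ≤ R) (V : Finset G) :
    (⨆ x : G → Bool, condProb P i V x) ≤ (⨆ x : G → Bool, spec f i (x i) x) -
      sigmoid (-R) ^ 3 * ∑' j, omegaOutside f i (V.erase i) j := by
  have hsum :=
    (hasSum_omegaOutside (a := true) (W := V.erase i) (x := fun _ => true) (hs i)).summable
  suffices hmul : sigmoid (-R) ^ 3 * ∑' j, omegaOutside f i (V.erase i) j ≤
      (⨆ x : G → Bool, spec f i (x i) x) - ⨆ x : G → Bool, condProb P i V x by linarith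
  rw [← tsum_mul_left]
  refine (hsum.mul_left _).tsum_le_of_sum_le fun F => ?_
  have hF := ciSup_le fun x => hP.condProb_le_iSup_spec_sub hdiag hs hR V x F
  rw [← Finset.mul_sum]
  linarith

end IsIsing

end

theorem ising_satisfies_H1_general {G : Type*} [Countable G] [DecidableEq G]
    (f : G → G → Bool → Bool → ℝ) (r : ℝ)
    (hdiag : ∀ (i : G) (a b : Bool), f i i a b = 0)
    (hsum : ∀ (i : G) (a : Bool), Summable fun j => max |f i j a true| |f i j a false|)
    (hrange : ∀ (i : G) (a : Bool), (∑' j, max |f i j a true| |f i j a false|) ≤ r)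
    (P : Measure (G → Bool)) [IsProbabilityMeasure P] (hP : IsIsing f P)
    (i : G) :
    ∃ κ : ℝ, 0 < κ ∧ ∀ V : Finset G,
      κ * (⨆ x : G → Bool, |spec f i (x i) x - condProb P i V x|) ≤
        (⨆ x : G → Bool, spec f i (x i) x) - (⨆ x : G → Bool, condProb P i V x) := by
  have hs : ∀ j, Summable (gpotBound f j) := fun j => summable_gpotBound f j (hsum j)
  have hR : ∀ j, ∑' k, gpotBound f j k ≤ 2 * r := fun j => tsum_gpotBound_le f j (hsum j) (hrange j)
  have hκ : 0 < Real.sigmoid (-(2 * r)) ^ 3 := pow_pos (Real.sigmoid_pos _) 3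
  refine ⟨Real.sigmoid (-(2 * r)) ^ 3, hκ, fun V => ?_⟩
  calc _ ≤ Real.sigmoid (-(2 * r)) ^ 3 * ∑' j, omegaOutside f i (V.erase i) j :=
        mul_le_mul_of_nonneg_left (ciSup_le fun x => hP.abs_spec_sub_condProb_le hs hR i V x) hκ.le
    _ ≤ _ := by linarith [hP.iSup_condProb_le (hdiag i) hs hR V]

theorem ising_satisfies_H1 {G : Type*} [Countable G] [DecidableEq G]
    (f : G → G → Bool → Bool → ℝ) (r : ℝ) (hr : 0 < r)
    (hdiag : ∀ (i : G) (a b : Bool), f i i a b = 0)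
    (hsum : ∀ (i : G) (a : Bool), Summable fun j => max |f i j a true| |f i j a false|)
    (hrange : ∀ (i : G) (a : Bool), (∑' j, max |f i j a true| |f i j a false|) ≤ r)
    (P : Measure (G → Bool)) [IsProbabilityMeasure P] (hP : IsIsing f P)
    (i : G) :
    ∃ κ : ℝ, 0 < κ ∧ ∀ V : Finset G,
      κ * (⨆ x : G → Bool, |spec f i (x i) x - condProb P i V x|) ≤
        (⨆ x : G → Bool, spec f i (x i) x) - (⨆ x : G → Bool, condProb P i V x) :=
  ising_satisfies_H1_general f r hdiag hsum hrange P hP i
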